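/- arXiv:1804.09029 — 4 statements merged into one kernel-verified Lean document; each statement's English description precedes it below -/
import Mathlib

section
/- Fix a linear order σ on E(Q_d). If an edge e of Q_d is good with respect to σ, then e is an edge of the final graph G_M(σ) produced by the Q₂-free process run with order σ. -/
open scoped Classical

/-- The vertex set of the `d`-dimensional hypercube: `{0,1}^d`. -/
abbrev Vtx (d : ℕ) := Fin d → Bool

/-- The `d`-dimensional hypercube graph `Q_d`: two vertices are adjacent iff
they differ in exactly one coordinate. -/
def cubeGraph (d : ℕ) : SimpleGraph (Vtx d) where
  Adj x y := hammingDist x y = 1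
  symm := ⟨by intro x y h; rwa [hammingDist_comm]⟩
  loopless := ⟨by intro x h; simp [hammingDist_self] at h⟩

/-- `C` is the edge set of a 4-cycle (a copy of `Q₂`) in `Q_d`. -/
def IsFourCycle (d : ℕ) (C : Finset (Sym2 (Vtx d))) : Prop :=
  ∃ a b c e : Vtx d, a ≠ b ∧ a ≠ c ∧ a ≠ e ∧ b ≠ c ∧ b ≠ e ∧ c ≠ e ∧
    (cubeGraph d).Adj a b ∧ (cubeGraph d).Adj b c ∧ (cubeGraph d).Adj c e ∧
    (cubeGraph d).Adj e a ∧ C = {s(a, b), s(b, c), s(c, e), s(e, a)}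

/-- The number of edges of `Q_d`. -/
noncomputable def numEdges (d : ℕ) : ℕ := Nat.card ↥(cubeGraph d).edgeSet

/-- A linear order on `E(Q_d)`, encoded as a bijection onto `Fin (numEdges d)`. -/
abbrev EdgeOrder (d : ℕ) := ↥(cubeGraph d).edgeSet ≃ Fin (numEdges d)

/-- One step of the `Q₂`-free process: add edge `e` to `G` unless doing so creates
a (new) copy of `Q₂`, i.e. a 4-cycle. -/
noncomputable def step (d : ℕ) (G : Finset (Sym2 (Vtx d))) (e : Sym2 (Vtx d)) :
    Finset (Sym2 (Vtx d)) :=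
  if ∃ C : Finset (Sym2 (Vtx d)), IsFourCycle d C ∧ C ⊆ insert e G ∧ ¬C ⊆ G then G
  else insert e G

/-- The final graph `G_M(σ)` of the `Q₂`-free process in `Q_d` run with the edge order `σ`:
consider the edges of `Q_d` in `σ`-order, adding each one unless it creates a copy of `Q₂`. -/
noncomputable def finalGraph (d : ℕ) (σ : EdgeOrder d) : Finset (Sym2 (Vtx d)) :=
  ((List.finRange (numEdges d)).map fun j => ((σ.symm j : ↥(cubeGraph d).edgeSet) : Sym2 (Vtx d))).foldl
    (step d) ∅

/-- An edge `e` of `Q_d` is good w.r.t. the order `σ` if for every 4-cycle of `Q_d`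
containing `e`, the `σ`-last of its four edges is not `e`. -/
def Good (d : ℕ) (σ : EdgeOrder d) (e : ↥(cubeGraph d).edgeSet) : Prop :=
  ∀ C : Finset (Sym2 (Vtx d)), IsFourCycle d C → (e : Sym2 (Vtx d)) ∈ C →
    ∃ f ∈ C, f ≠ (e : Sym2 (Vtx d)) ∧ ∃ hf : f ∈ (cubeGraph d).edgeSet, σ e < σ ⟨f, hf⟩

/-!
The process only ever adds edges, and when `e` is considered the current graph consists of
edges that come before `e`. Adding `e` is refused only if some 4-cycle through `e` has its
other three edges already present, i.e. `σ`-earlier than `e`; then `e` would be the `σ`-last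
edge of that 4-cycle, which goodness forbids.
-/

lemma List.exists_finRange_eq_append_cons {n : ℕ} (i : Fin n) :
    ∃ l₁ l₂, List.finRange n = l₁ ++ i :: l₂ ∧ ∀ j ∈ l₁, j < i := by
  obtain ⟨l₁, l₂, h⟩ := List.mem_iff_append.1 (List.mem_finRange i)
  have hsorted := List.pairwise_lt_finRange n
  rw [h, List.pairwise_append] at hsorted
  exact ⟨l₁, l₂, h, fun j hj => hsorted.2.2 j hj i List.mem_cons_self⟩

section FreeProcess

variable {d : ℕ}

lemma subset_step (G : Finset (Sym2 (Vtx d))) (f : Sym2 (Vtx d)) : G ⊆ step d G f := by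
  unfold step
  split
  · exact Finset.Subset.refl G
  · exact Finset.subset_insert f G

lemma step_subset_insert (G : Finset (Sym2 (Vtx d))) (f : Sym2 (Vtx d)) :
    step d G f ⊆ insert f G := by
  unfold step
  split
  · exact Finset.subset_insert f G
  · exact Finset.Subset.refl _

lemma subset_foldl_step (l : List (Sym2 (Vtx d))) (G : Finset (Sym2 (Vtx d))) :
    G ⊆ l.foldl (step d) G := by
  induction l generalizing G with
  | nil => exact Finset.Subset.refl G
  | cons f l ih => exact (subset_step G f).trans (ih _)

lemma mem_or_mem_of_mem_foldl_step {l : List (Sym2 (Vtx d))} {G : Finset (Sym2 (Vtx d))}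
    {x : Sym2 (Vtx d)} (hx : x ∈ l.foldl (step d) G) : x ∈ G ∨ x ∈ l := by
  induction l generalizing G with
  | nil => exact Or.inl hx
  | cons f l ih =>
    rcases ih hx with hx | hx
    · rcases Finset.mem_insert.1 (step_subset_insert G f hx) with rfl | hx
      · exact Or.inr List.mem_cons_self
      · exact Or.inl hx
    · exact Or.inr (List.mem_cons_of_mem f hx)

lemma mem_step_self {G : Finset (Sym2 (Vtx d))} {e : Sym2 (Vtx d)}
    (h : ∀ C, IsFourCycle d C → e ∈ C → ∃ f ∈ C, f ≠ e ∧ f ∉ G) : e ∈ step d G e := by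
  unfold step
  rw [if_neg]
  · exact Finset.mem_insert_self e G
  rintro ⟨C, hC, hCe, hCG⟩
  have heC : e ∈ C := by
    by_contra heC
    exact hCG fun x hx => (Finset.mem_insert.1 (hCe hx)).resolve_left (ne_of_mem_of_not_mem hx heC)
  obtain ⟨f, hfC, hfe, hfG⟩ := h C hC heC
  exact hfG ((Finset.mem_insert.1 (hCe hfC)).resolve_left hfe)

lemma mem_foldl_step_append_cons {l₁ l₂ : List (Sym2 (Vtx d))} {G : Finset (Sym2 (Vtx d))}
    {e : Sym2 (Vtx d)} (h : ∀ C, IsFourCycle d C → e ∈ C → ∃ f ∈ C, f ≠ e ∧ f ∉ G ∧ f ∉ l₁) :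
    e ∈ (l₁ ++ e :: l₂).foldl (step d) G := by
  rw [List.foldl_append, List.foldl_cons]
  refine subset_foldl_step l₂ _ (mem_step_self fun C hC heC => ?_)
  obtain ⟨f, hfC, hfe, hfG, hfl₁⟩ := h C hC heC
  exact ⟨f, hfC, hfe, fun hf => (mem_or_mem_of_mem_foldl_step hf).elim hfG hfl₁⟩

end FreeProcess

/-- Fix a linear order `σ` on `E(Q_d)`. If an edge `e` of `Q_d` is good with
respect to `σ`, then `e` is an edge of the final graph `G_M(σ)` produced by the `Q₂`-free
process run with the order `σ`. -/
theorem good_mem_finalGraph (d : ℕ) (σ : EdgeOrder d) (e : ↥(cubeGraph d).edgeSet)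
    (he : Good d σ e) : (e : Sym2 (Vtx d)) ∈ finalGraph d σ := by
  obtain ⟨l₁, l₂, hsplit, hbefore⟩ := List.exists_finRange_eq_append_cons (σ e)
  rw [finalGraph, hsplit, List.map_append, List.map_cons, Equiv.symm_apply_apply]
  refine mem_foldl_step_append_cons fun C hC heC => ?_
  obtain ⟨f, hfC, hfe, hf, hlater⟩ := he C hC heC
  refine ⟨f, hfC, hfe, Finset.notMem_empty f, fun hfl₁ => ?_⟩
  obtain ⟨j, hj, rfl⟩ := List.mem_map.1 hfl₁
  rw [Subtype.coe_eta, Equiv.apply_symm_apply] at hlater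
  exact (hbefore j hj).not_gt hlater
end

section
/- Define, for x, y ∈ [0,1] and integer d ≥ 2, f(x,y,d) = (1 − x³)^{d−1}(1 − y³)^{d−1} and g(x,y,d) = (1 − x³ − y³ + x²y²·min{x,y})^{d−2} · (1 − (max{x,y})²). Then ∫₀¹∫₀¹ (g(x,y,d) − f(x,y,d)) dx dy = o(d^{−2/3}) as d → ∞. -/
/-!
Write `A` for the base of `g` and `B = (1 - x³)(1 - y³)`, so that `f = B^(d-1)`. On the unit
square `B ≤ A ≤ min (1 - x³) (1 - y³)`, `A - B ≤ x²y²` and `|1 - max(x,y)² - B| ≤ x² + y²`.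
Splitting `g - f = (A^(d-2) - B^(d-2))(1 - max(x,y)²) + B^(d-2)(1 - max(x,y)² - B)` and using
`A^(d-2) - B^(d-2) ≤ (d-2) A^(d-3) (A - B)`, the integrand is dominated by sums of products of the
one-variable functions `t²(1 - t³)^k`, whose integrals are `1/(3(k+1))`. Hence the double integral
is `O(1/d)`, which is `o(d^(-2/3))`.
-/

open Filter Asymptotics intervalIntegral MeasureTheory Set

lemma isLittleO_natCast_rpow_of_lt {a b : ℝ} (hab : a < b) :
    (fun d : ℕ => (d : ℝ) ^ a) =o[atTop] (fun d : ℕ => (d : ℝ) ^ b) := by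
  have hsmall : (fun d : ℕ => (d : ℝ) ^ (a - b)) =o[atTop] (fun _ => (1 : ℝ)) := by
    refine (isLittleO_one_iff ℝ).2 ?_
    have := (tendsto_rpow_neg_atTop (y := b - a) (by linarith)).comp tendsto_natCast_atTop_atTop
    simpa [Function.comp_def] using this
  refine ((isBigO_refl (fun d : ℕ => (d : ℝ) ^ b) atTop).mul_isLittleO hsmall).congr' ?_ (by simp)
  filter_upwards [eventually_gt_atTop 0] with d hd
  rw [← Real.rpow_add (by exact_mod_cast hd), add_sub_cancel]

lemma abs_pow_succ_mul_sub_pow_le {a b m : ℝ} (hb : 0 ≤ b) (hba : b ≤ a) (hm0 : 0 ≤ m)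
    (hm1 : m ≤ 1) (n : ℕ) :
    |a ^ (n + 1) * m - b ^ (n + 2)| ≤ (n + 1) * a ^ n * (a - b) + b ^ (n + 1) * |m - b| := by
  have hpow := abs_pow_sub_pow_le a b (n + 1)
  rw [abs_of_nonneg (sub_nonneg.2 hba), abs_of_nonneg (hb.trans hba), abs_of_nonneg hb,
    max_eq_left hba, Nat.add_sub_cancel, Nat.cast_succ] at hpow
  calc |a ^ (n + 1) * m - b ^ (n + 2)|
      = |(a ^ (n + 1) - b ^ (n + 1)) * m + b ^ (n + 1) * (m - b)| := by ring_nf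
    _ ≤ |a ^ (n + 1) - b ^ (n + 1)| * m + b ^ (n + 1) * |m - b| := by
      grw [abs_add_le, abs_mul, abs_mul, abs_of_nonneg hm0, abs_of_nonneg (pow_nonneg hb _)]
    _ ≤ (n + 1) * a ^ n * (a - b) + b ^ (n + 1) * |m - b| := by
      grw [mul_le_of_le_one_right (abs_nonneg _) hm1, hpow]
      linarith

lemma norm_integral_integral_le_of_norm_le {F G : ℝ → ℝ → ℝ} {a b : ℝ} (hab : a ≤ b)
    (hG : Continuous (Function.uncurry G))
    (hFG : ∀ x ∈ Icc a b, ∀ y ∈ Icc a b, ‖F x y‖ ≤ G x y) :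
    ‖∫ x in a..b, ∫ y in a..b, F x y‖ ≤ ∫ x in a..b, ∫ y in a..b, G x y := by
  refine norm_integral_le_of_norm_le hab (Eventually.of_forall fun x hx => ?_)
    ((continuous_parametric_intervalIntegral_of_continuous' hG a b).intervalIntegrable a b)
  refine norm_integral_le_of_norm_le hab (Eventually.of_forall fun y hy => ?_)
    ((hG.comp (Continuous.prodMk_right x)).intervalIntegrable a b)
  exact hFG x (Ioc_subset_Icc_self hx) y (Ioc_subset_Icc_self hy)

lemma integral_integral_mul_add_add {φ ψ v w : ℝ → ℝ} (hφ : Continuous φ) (hψ : Continuous ψ)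
    (hv : Continuous v) (hw : Continuous w) :
    ∫ x in (0 : ℝ)..1, ∫ y in (0 : ℝ)..1, (φ x * ψ y + v x + w y) =
      (∫ x in (0 : ℝ)..1, φ x) * (∫ y in (0 : ℝ)..1, ψ y) + (∫ x in (0 : ℝ)..1, v x) +
        ∫ y in (0 : ℝ)..1, w y := by
  have hint : ∀ f : ℝ → ℝ, Continuous f → IntervalIntegrable f volume 0 1 :=
    fun f hf => hf.intervalIntegrable 0 1
  have hinner : ∀ x, ∫ y in (0 : ℝ)..1, (φ x * ψ y + v x + w y) =
      φ x * (∫ y in (0 : ℝ)..1, ψ y) + v x + ∫ y in (0 : ℝ)..1, w y := by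
    intro x
    rw [integral_add (hint (fun y => φ x * ψ y + v x) (by fun_prop)) (hint w hw),
      integral_add (hint (fun y => φ x * ψ y) (by fun_prop)) intervalIntegrable_const,
      intervalIntegral.integral_const_mul]
    simp
  simp_rw [hinner]
  rw [integral_add (hint (fun x => φ x * (∫ y in (0 : ℝ)..1, ψ y) + v x) (by fun_prop))
      intervalIntegrable_const,
    integral_add (hint (fun x => φ x * (∫ y in (0 : ℝ)..1, ψ y)) (by fun_prop)) (hint v hv),
    intervalIntegral.integral_mul_const]
  simp

lemma integral_sq_mul_one_sub_cube_pow (n : ℕ) :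
    ∫ x in (0 : ℝ)..1, x ^ 2 * (1 - x ^ 3) ^ n = (1 : ℝ) / (3 * (n + 1)) := by
  have hderiv : ∀ x ∈ uIcc (0 : ℝ) 1, HasDerivAt
      (fun x : ℝ => -(1 - x ^ 3) ^ (n + 1) / (3 * (n + 1))) (x ^ 2 * (1 - x ^ 3) ^ n) x := by
    intro x _
    have hcube : HasDerivAt (fun x : ℝ => 1 - x ^ 3) (-(3 * x ^ 2)) x := by
      simpa using (hasDerivAt_pow 3 x).const_sub 1
    refine ((hcube.pow (n + 1)).neg.div_const _).congr_deriv ?_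
    push_cast
    field_simp
  rw [integral_eq_sub_of_hasDerivAt hderiv ((by fun_prop : Continuous _).intervalIntegrable _ _)]
  field_simp
  simp

lemma g_base_bounds {x y : ℝ} (hx : x ∈ Icc (0 : ℝ) 1) (hy : y ∈ Icc (0 : ℝ) 1) :
    (1 - x ^ 3) * (1 - y ^ 3) ≤ 1 - x ^ 3 - y ^ 3 + x ^ 2 * y ^ 2 * min x y ∧
    1 - x ^ 3 - y ^ 3 + x ^ 2 * y ^ 2 * min x y ≤ 1 - x ^ 3 ∧
    1 - x ^ 3 - y ^ 3 + x ^ 2 * y ^ 2 * min x y ≤ 1 - y ^ 3 ∧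
    1 - x ^ 3 - y ^ 3 + x ^ 2 * y ^ 2 * min x y - (1 - x ^ 3) * (1 - y ^ 3) ≤ x ^ 2 * y ^ 2 := by
  obtain ⟨hx0, hx1⟩ := hx
  obtain ⟨hy0, hy1⟩ := hy
  have hx2 : x ^ 2 ≤ 1 := pow_le_one₀ hx0 hx1
  have hy2 : y ^ 2 ≤ 1 := pow_le_one₀ hy0 hy1
  have hxy : 0 ≤ x ^ 2 * y ^ 2 := by positivity
  rcases le_total x y with h | h
  · rw [min_eq_left h]
    have h1 := mul_le_mul (pow_le_pow_left₀ hx0 h 3) hy2 (sq_nonneg y) (pow_nonneg hy0 3)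
    have h2 := mul_le_of_le_one_right (pow_nonneg hx0 3) hy2
    refine ⟨?_, ?_, ?_, ?_⟩ <;> nlinarith [mul_nonneg hxy (sub_nonneg.2 hy1)]
  · rw [min_eq_right h]
    have h1 := mul_le_mul (pow_le_pow_left₀ hy0 h 3) hx2 (sq_nonneg x) (pow_nonneg hx0 3)
    have h2 := mul_le_of_le_one_right (pow_nonneg hy0 3) hx2
    refine ⟨?_, ?_, ?_, ?_⟩ <;> nlinarith [mul_nonneg hxy (sub_nonneg.2 hx1)]

lemma abs_g_sub_f_le (n : ℕ) {x y : ℝ} (hx : x ∈ Icc (0 : ℝ) 1) (hy : y ∈ Icc (0 : ℝ) 1) :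
    |(1 - x ^ 3 - y ^ 3 + x ^ 2 * y ^ 2 * min x y) ^ (n + 1) * (1 - max x y ^ 2) -
        (1 - x ^ 3) ^ (n + 2) * (1 - y ^ 3) ^ (n + 2)| ≤
      (n + 1) * (x ^ 2 * (1 - x ^ 3) ^ (n / 2)) * (y ^ 2 * (1 - y ^ 3) ^ (n / 2)) +
        x ^ 2 * (1 - x ^ 3) ^ (n + 1) + y ^ 2 * (1 - y ^ 3) ^ (n + 1) := by
  obtain ⟨hBA, hAx, hAy, hAB⟩ := g_base_bounds hx hy
  set A := 1 - x ^ 3 - y ^ 3 + x ^ 2 * y ^ 2 * min x y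
  obtain ⟨hx0, hx1⟩ := hx
  obtain ⟨hy0, hy1⟩ := hy
  have hPx : 0 ≤ 1 - x ^ 3 := sub_nonneg.2 (pow_le_one₀ hx0 hx1)
  have hPy : 0 ≤ 1 - y ^ 3 := sub_nonneg.2 (pow_le_one₀ hy0 hy1)
  have hB0 : 0 ≤ (1 - x ^ 3) * (1 - y ^ 3) := mul_nonneg hPx hPy
  have hA0 : 0 ≤ A := hB0.trans hBA
  have hA1 : A ≤ 1 := hAx.trans (by linarith [pow_nonneg hx0 3])
  have hM1 : 1 - max x y ^ 2 ≤ 1 := by linarith [sq_nonneg (max x y)]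
  have hM0 : 0 ≤ 1 - max x y ^ 2 :=
    sub_nonneg.2 (pow_le_one₀ (le_max_of_le_left hx0) (max_le hx1 hy1))
  have hMB : |1 - max x y ^ 2 - (1 - x ^ 3) * (1 - y ^ 3)| ≤ x ^ 2 + y ^ 2 := by
    have : max x y ^ 2 ≤ x ^ 2 + y ^ 2 := by
      rcases max_choice x y with h | h <;> rw [h] <;> nlinarith
    have hx3 : x ^ 3 ≤ x ^ 2 := pow_le_pow_of_le_one hx0 hx1 (by norm_num)
    have hy3 : y ^ 3 ≤ y ^ 2 := pow_le_pow_of_le_one hy0 hy1 (by norm_num)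
    rw [abs_le]
    constructor <;> nlinarith [mul_nonneg (pow_nonneg hx0 3) (pow_nonneg hy0 3),
      mul_nonneg (pow_nonneg hx0 3) hPy, pow_nonneg hy0 3]
  -- `A ≤ 1 - x³` and `A ≤ 1 - y³` split the power of `A` evenly between the two variables.
  have hApow : A ^ n ≤ (1 - x ^ 3) ^ (n / 2) * (1 - y ^ 3) ^ (n / 2) := calc
    A ^ n ≤ A ^ (2 * (n / 2)) := pow_le_pow_of_le_one hA0 hA1 (Nat.mul_div_le n 2)
    _ = (A ^ 2) ^ (n / 2) := pow_mul A 2 (n / 2)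
    _ ≤ ((1 - x ^ 3) * (1 - y ^ 3)) ^ (n / 2) := by
      gcongr
      rw [sq]
      exact mul_le_mul hAx hAy hA0 hPx
    _ = _ := mul_pow _ _ _
  rw [← mul_pow]
  grw [abs_pow_succ_mul_sub_pow_le hB0 hBA hM0 hM1 n, hApow, hAB, hMB]
  · have hQx : (1 - x ^ 3) ^ (n + 1) ≤ 1 := pow_le_one₀ hPx (by linarith [pow_nonneg hx0 3])
    have hQy : (1 - y ^ 3) ^ (n + 1) ≤ 1 := pow_le_one₀ hPy (by linarith [pow_nonneg hy0 3])
    have := mul_le_of_le_one_right (mul_nonneg (sq_nonneg x) (pow_nonneg hPx (n + 1))) hQy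
    have := mul_le_of_le_one_right (mul_nonneg (sq_nonneg y) (pow_nonneg hPy (n + 1))) hQx
    rw [mul_pow]
    linarith
  · linarith

lemma norm_integral_g_sub_f_le (n : ℕ) :
    ‖∫ x in (0 : ℝ)..1, ∫ y in (0 : ℝ)..1,
        ((1 - x ^ 3 - y ^ 3 + x ^ 2 * y ^ 2 * min x y) ^ (n + 1) * (1 - max x y ^ 2) -
          (1 - x ^ 3) ^ (n + 2) * (1 - y ^ 3) ^ (n + 2))‖ ≤ 3 / (n + 3) := by
  have hk : (n + 1 : ℝ) ≤ 2 * ((n / 2 : ℕ) + 1) := by norm_cast; omega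
  have hk' : (n + 3 : ℝ) ≤ 4 * ((n / 2 : ℕ) + 1) := by norm_cast; omega
  calc _ ≤ ∫ x in (0 : ℝ)..1, ∫ y in (0 : ℝ)..1,
          ((n + 1) * (x ^ 2 * (1 - x ^ 3) ^ (n / 2)) * (y ^ 2 * (1 - y ^ 3) ^ (n / 2)) +
            x ^ 2 * (1 - x ^ 3) ^ (n + 1) + y ^ 2 * (1 - y ^ 3) ^ (n + 1)) :=
        norm_integral_integral_le_of_norm_le zero_le_one (by fun_prop)
          fun x hx y hy => abs_g_sub_f_le n hx hy
    _ = (n + 1) * (1 / (3 * ((n / 2 : ℕ) + 1))) * (1 / (3 * ((n / 2 : ℕ) + 1))) +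
          1 / (3 * ((n + 1 : ℕ) + 1)) + 1 / (3 * ((n + 1 : ℕ) + 1)) := by
      rw [integral_integral_mul_add_add (by fun_prop) (by fun_prop) (by fun_prop) (by fun_prop),
        intervalIntegral.integral_const_mul, integral_sq_mul_one_sub_cube_pow,
        integral_sq_mul_one_sub_cube_pow]
    _ ≤ 3 / (n + 3) := by
      have hK : (0 : ℝ) < (n / 2 : ℕ) + 1 := by positivity
      have h1 : (n + 1) * (1 / (3 * ((n / 2 : ℕ) + 1))) * (1 / (3 * ((n / 2 : ℕ) + 1 : ℝ))) ≤
          8 / (9 * (n + 3)) := by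
        field_simp
        nlinarith
      have h2 : 1 / (3 * ((n + 1 : ℕ) + 1 : ℝ)) ≤ 1 / (n + 3) := by
        rw [div_le_div_iff₀ (by positivity) (by positivity)]
        push_cast
        linarith
      have h3 : 8 / (9 * (n + 3)) + 1 / (n + 3) + 1 / (n + 3) ≤ 3 / (n + 3 : ℝ) := by
        field_simp
        linarith
      linarith

/-- With `f(x,y,d) = (1 − x³)^(d−1)·(1 − y³)^(d−1)` and
`g(x,y,d) = (1 − x³ − y³ + x²y²·min{x,y})^(d−2)·(1 − (max{x,y})²)`, one has
`∫₀¹∫₀¹ (g − f) dx dy = o(d^(−2/3))` as `d → ∞`. -/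
theorem integral_g_sub_f_isLittleO :
    (fun d : ℕ => ∫ x in (0 : ℝ)..1, ∫ y in (0 : ℝ)..1,
        ((1 - x ^ 3 - y ^ 3 + x ^ 2 * y ^ 2 * min x y) ^ (d - 2) * (1 - max x y ^ 2) -
          (1 - x ^ 3) ^ (d - 1) * (1 - y ^ 3) ^ (d - 1)))
      =o[atTop] (fun d : ℕ => (d : ℝ) ^ (-(2 : ℝ) / 3)) := by
  refine IsBigO.trans_isLittleO (g := fun d : ℕ => (d : ℝ) ^ (-1 : ℝ)) ?_
    (isLittleO_natCast_rpow_of_lt (by norm_num))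
  refine IsBigO.of_bound 3 ?_
  filter_upwards [eventually_ge_atTop 3] with d hd
  obtain ⟨n, rfl⟩ := Nat.exists_eq_add_of_le' hd
  rw [show n + 3 - 2 = n + 1 by omega, show n + 3 - 1 = n + 2 by omega, Real.rpow_neg_one,
    norm_inv, Real.norm_natCast, ← div_eq_mul_inv]
  exact_mod_cast norm_integral_g_sub_f_le n
end

section
/- For all sufficiently large d, if 0 ≤ x ≤ y ≤ d^{−1/4}, then h(x,y) := [(1 − x³ − y³ + x³y²) / ((1 − x³)(1 − y³))]^{d−2} · (1 − y²)/((1 − x³)(1 − y³)) < 1 + 3d^{−1/4}. -/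
set_option maxHeartbeats 1000000 in
/-- For all sufficiently large `d`, if `0 ≤ x ≤ y ≤ d^(−1/4)`, then
`h(x,y) = [(1 − x³ − y³ + x³y²)/((1 − x³)(1 − y³))]^(d−2) · (1 − y²)/((1 − x³)(1 − y³))`
is less than `1 + 3·d^(−1/4)`. -/
theorem ratio_h_lt_one_add :
    ∃ D : ℕ, ∀ d : ℕ, D ≤ d → ∀ x y : ℝ, 0 ≤ x → x ≤ y → y ≤ (d : ℝ) ^ (-(1 : ℝ) / 4) →
      ((1 - x ^ 3 - y ^ 3 + x ^ 3 * y ^ 2) / ((1 - x ^ 3) * (1 - y ^ 3))) ^ (d - 2) *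
          ((1 - y ^ 2) / ((1 - x ^ 3) * (1 - y ^ 3))) <
        1 + 3 * (d : ℝ) ^ (-(1 : ℝ) / 4) := by
  refine ⟨10000, fun d hd x y hx hxy hy => ?_⟩
  obtain ⟨ε, hεdef⟩ : ∃ e : ℝ, e = (d : ℝ) ^ (-(1 : ℝ) / 4) := ⟨_, rfl⟩
  rw [← hεdef] at hy ⊢
  have hd1 : (10000 : ℝ) ≤ (d : ℝ) := by exact_mod_cast hd
  have hdpos : (0 : ℝ) < (d : ℝ) := by linarith
  have hεpos : 0 < ε := by rw [hεdef]; exact Real.rpow_pos_of_pos hdpos _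
  have hε4 : ε ^ 4 = (d : ℝ)⁻¹ := by
    rw [hεdef, ← Real.rpow_natCast ((d : ℝ) ^ (-(1 : ℝ) / 4)) 4,
      ← Real.rpow_mul hdpos.le]
    norm_num
    rw [Real.rpow_neg hdpos.le, Real.rpow_one]
  have hdε : (d : ℝ) * ε ^ 4 = 1 := by
    rw [hε4]; field_simp
  have hε10 : ε ≤ 1 / 10 := by
    have h4 : ε ^ 4 ≤ (1 / 10 : ℝ) ^ 4 := by
      rw [hε4]
      have : (d : ℝ)⁻¹ ≤ (10000 : ℝ)⁻¹ := by
        apply inv_anti₀ <;> linarith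
      linarith [this]
    exact le_of_pow_le_pow_left₀ (by norm_num) (by norm_num) h4
  have hyε : y ≤ ε := hy
  have hxε : x ≤ ε := le_trans hxy hy
  have hy0 : 0 ≤ y := le_trans hx hxy
  have hy10 : y ≤ 1 / 10 := le_trans hyε hε10
  have hx10 : x ≤ 1 / 10 := le_trans hxy hy10
  have hA : (9 / 10 : ℝ) ≤ 1 - x ^ 3 := by nlinarith [pow_le_pow_left₀ hx hx10 3]
  have hB : (9 / 10 : ℝ) ≤ 1 - y ^ 3 := by nlinarith [pow_le_pow_left₀ hy0 hy10 3]
  have hDpos : (0 : ℝ) < (1 - x ^ 3) * (1 - y ^ 3) := by nlinarith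
  have hDne : ((1 - x ^ 3) * (1 - y ^ 3)) ≠ 0 := ne_of_gt hDpos
  obtain ⟨t, htdef⟩ : ∃ t : ℝ, t = x ^ 3 * y ^ 2 * (1 - y) / ((1 - x ^ 3) * (1 - y ^ 3)) :=
    ⟨_, rfl⟩
  have ht0 : 0 ≤ t := by
    rw [htdef]
    apply div_nonneg _ hDpos.le
    exact mul_nonneg (mul_nonneg (pow_nonneg hx 3) (pow_nonneg hy0 2)) (by linarith)
  have hx3ε : x ^ 3 ≤ ε ^ 3 := pow_le_pow_left₀ hx hxε 3
  have hy2ε : y ^ 2 ≤ ε ^ 2 := pow_le_pow_left₀ hy0 hyε 2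
  have htle : t ≤ 2 * ε ^ 5 := by
    rw [htdef, div_le_iff₀ hDpos]
    have ha : x ^ 3 * y ^ 2 ≤ ε ^ 3 * ε ^ 2 :=
      mul_le_mul hx3ε hy2ε (pow_nonneg hy0 2) (pow_nonneg hεpos.le 3)
    have hb : x ^ 3 * y ^ 2 * (1 - y) ≤ x ^ 3 * y ^ 2 := by
      have hnn : 0 ≤ x ^ 3 * y ^ 2 := by positivity
      nlinarith
    have h2 : ε ^ 3 * ε ^ 2 = ε ^ 5 := by ring
    have h1 : x ^ 3 * y ^ 2 * (1 - y) ≤ ε ^ 5 := by linarith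
    have h3 : (0:ℝ) ≤ 2 * ((1 - x ^ 3) * (1 - y ^ 3)) - 1 := by nlinarith
    nlinarith [mul_nonneg (pow_nonneg hεpos.le 5) h3]
  have hbase : (1 - x ^ 3 - y ^ 3 + x ^ 3 * y ^ 2) / ((1 - x ^ 3) * (1 - y ^ 3)) = 1 + t := by
    rw [htdef]
    field_simp
    ring
  obtain ⟨n, hndef⟩ : ∃ n : ℕ, n = d - 2 := ⟨_, rfl⟩
  rw [← hndef]
  have hnle : (n : ℝ) ≤ (d : ℝ) := by rw [hndef]; exact_mod_cast Nat.sub_le d 2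
  have hn0 : (0 : ℝ) ≤ (n : ℝ) := Nat.cast_nonneg n
  have hnt : (n : ℝ) * t ≤ 2 * ε := by
    have h1 : (n : ℝ) * t ≤ (d : ℝ) * (2 * ε ^ 5) := by
      apply mul_le_mul hnle htle ht0 hdpos.le
    have h2 : (d : ℝ) * (2 * ε ^ 5) = 2 * ε * ((d : ℝ) * ε ^ 4) := by ring
    rw [h2, hdε] at h1
    linarith
  have hε5small : t ≤ 1 / 2 := by
    have h5 : ε ^ 5 ≤ (1 / 10 : ℝ) ^ 5 := pow_le_pow_left₀ hεpos.le hε10 5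
    norm_num at h5
    linarith
  have hpow_pos : (0 : ℝ) < (1 + t) ^ n := pow_pos (by linarith) n
  -- (1+t)^n * (1-t)^n ≤ 1
  have hmul : (1 + t) ^ n * (1 - t) ^ n ≤ 1 := by
    rw [← mul_pow]
    apply pow_le_one₀ (by nlinarith) (by nlinarith)
  -- 1 - n*t ≤ (1-t)^n
  have hbern : 1 - (n : ℝ) * t ≤ (1 - t) ^ n := by
    have := one_add_mul_le_pow (a := -t) (by linarith) n
    rw [sub_eq_add_neg (1:ℝ) t]
    linarith [this]
  have hntpos : (0 : ℝ) < 1 - (n : ℝ) * t := by linarith [hnt, hε10]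
  have hkey : (1 + t) ^ n ≤ 1 / (1 - (n : ℝ) * t) := by
    rw [le_div_iff₀ hntpos]
    calc (1 + t) ^ n * (1 - (n : ℝ) * t) ≤ (1 + t) ^ n * (1 - t) ^ n := by
          apply mul_le_mul_of_nonneg_left _ hpow_pos.le
          exact hbern
      _ ≤ 1 := hmul
  -- second factor ≤ 1
  have hF1 : (1 - y ^ 2) / ((1 - x ^ 3) * (1 - y ^ 3)) ≤ 1 := by
    rw [div_le_one hDpos]
    have hx3y3 : x ^ 3 ≤ y ^ 3 := pow_le_pow_left₀ hx hxy 3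
    have hy3 : y ^ 3 ≤ y ^ 2 / 10 := by nlinarith [sq_nonneg y]
    nlinarith [mul_nonneg (pow_nonneg hx 3) (pow_nonneg hy0 3)]
  have hF0 : 0 ≤ (1 - y ^ 2) / ((1 - x ^ 3) * (1 - y ^ 3)) := by
    apply div_nonneg _ hDpos.le
    nlinarith
  rw [hbase]
  calc (1 + t) ^ n * ((1 - y ^ 2) / ((1 - x ^ 3) * (1 - y ^ 3)))
      ≤ (1 + t) ^ n * 1 := mul_le_mul_of_nonneg_left hF1 hpow_pos.le
    _ = (1 + t) ^ n := by ring
    _ ≤ 1 / (1 - (n : ℝ) * t) := hkey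
    _ ≤ 1 / (1 - 2 * ε) := by
        apply one_div_le_one_div_of_le (by linarith) (by linarith)
    _ < 1 + 3 * ε := by
        rw [div_lt_iff₀ (by linarith)]
        nlinarith [mul_pos hεpos (show (0:ℝ) < 1 - 6 * ε by linarith)]
end

section
/- The functions q(t) = (1/2)·e^{−8t³}, w(t) = e^{−24t³}, x(t) = 6t·e^{−16t³}, y(t) = 12t²·e^{−8t³} defined for t ≥ 0 satisfy the initial conditions q(0) = 1/2, w(0) = 1, x(0) = y(0) = 0 and the system of differential equations dq/dt = −y, dw/dt = −3yw/q, dx/dt = 3w/q − 2xy/q, dy/dt = 2x/q − y²/q. -/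
open Real

theorem hasDerivAt_exp_const_mul_cube (c t : ℝ) :
    HasDerivAt (fun t => exp (c * t ^ 3)) (3 * c * t ^ 2 * exp (c * t ^ 3)) t := by
  convert ((hasDerivAt_pow 3 t).const_mul c).exp using 1
  push_cast; ring

theorem exp_nat_mul_const_mul (k : ℕ) (c s : ℝ) : exp (k * c * s) = exp (c * s) ^ k := by
  rw [← exp_nat_mul, mul_assoc]

/-- The functions `q(t) = (1/2)e^(−8t³)`, `w(t) = e^(−24t³)`,
`x(t) = 6t·e^(−16t³)`, `y(t) = 12t²·e^(−8t³)` satisfy the initial conditions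
`q(0) = 1/2`, `w(0) = 1`, `x(0) = y(0) = 0` and the system of differential equations
`q' = −y`, `w' = −3yw/q`, `x' = 3w/q − 2xy/q`, `y' = 2x/q − y²/q` for `t ≥ 0`. -/
theorem heuristic_ode_solution (q w x y : ℝ → ℝ)
    (hq : ∀ t, q t = (1 / 2) * Real.exp (-8 * t ^ 3))
    (hw : ∀ t, w t = Real.exp (-24 * t ^ 3))
    (hx : ∀ t, x t = 6 * t * Real.exp (-16 * t ^ 3))
    (hy : ∀ t, y t = 12 * t ^ 2 * Real.exp (-8 * t ^ 3)) :
    q 0 = 1 / 2 ∧ w 0 = 1 ∧ x 0 = 0 ∧ y 0 = 0 ∧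
    ∀ t : ℝ, 0 ≤ t →
      HasDerivAt q (-y t) t ∧
      HasDerivAt w (-3 * y t * w t / q t) t ∧
      HasDerivAt x (3 * w t / q t - 2 * x t * y t / q t) t ∧
      HasDerivAt y (2 * x t / q t - (y t) ^ 2 / q t) t := by
  obtain rfl : q = _ := funext hq
  obtain rfl : w = _ := funext hw
  obtain rfl : x = _ := funext hx
  obtain rfl : y = _ := funext hy
  refine ⟨by norm_num, by norm_num, by norm_num, by norm_num, fun t _ => ?_⟩
  beta_reduce
  -- everything is a polynomial in `t` and `E = exp (-8 t³)`, with `E' = -24 t² E`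
  have hE : exp (-8 * t ^ 3) ≠ 0 := exp_ne_zero _
  have hE₂ : exp (-16 * t ^ 3) = exp (-8 * t ^ 3) ^ 2 := by
    rw [← exp_nat_mul_const_mul]; norm_num
  have hE₃ : exp (-24 * t ^ 3) = exp (-8 * t ^ 3) ^ 3 := by
    rw [← exp_nat_mul_const_mul]; norm_num
  have dE₈ := hasDerivAt_exp_const_mul_cube (-8) t
  have dE₁₆ := hasDerivAt_exp_const_mul_cube (-16) t
  refine ⟨?_, ?_, ?_, ?_⟩
  · exact (dE₈.const_mul _).congr_deriv (by ring)
  · refine (hasDerivAt_exp_const_mul_cube (-24) t).congr_deriv ?_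
    rw [hE₃]; field_simp; ring
  · refine (((hasDerivAt_id' t).const_mul 6).mul dE₁₆).congr_deriv ?_
    rw [hE₂, hE₃]; field_simp; ring
  · refine (((hasDerivAt_pow 2 t).const_mul 12).mul dE₈).congr_deriv ?_
    rw [hE₂]; field_simp; ring
end
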